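/- arXiv:2111.08199 — 2 statements merged into one kernel-verified Lean document; each statement's English description precedes it below -/
import Mathlib

section
/- For every sequence a = (a_i)_{i≥1} ∈ C = ∏_{i≥1} [2^{−2i}, 2^{−2i+1}] (with the convention a_0 = 1), the function R[a] on Υ = {(0,0)} ∪ ((0,1] × ℤ_{≥0}), defined for points s_i = (s,i) and t_j = (t,j) by R[a](s_i, t_j) = a_i·|s − t| if i = j and R[a](s_i, t_j) = a_i·s + a_j·t if i ≠ j, is a metric on Υ, and the metric space (Υ, R[a]) is compact and is a CAT(0) (in particular geodesic) space. -/
/-- The set `Υ = {(0,0)} ∪ ((0,1] × ℤ_{≥0})`, an element `(s, i)` being the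
point at parameter `s` on the `i`-th edge. -/
def Upsilon : Type := {p : ℝ × ℕ // p = (0, 0) ∨ (0 < p.1 ∧ p.1 ≤ 1)}

/-- The distance function `R[a]` on `Υ`:
`R[a]((s,i), (t,j)) = a i * |s - t|` if `i = j`, and
`R[a]((s,i), (t,j)) = a i * s + a j * t` otherwise. -/
noncomputable def Rmet (a : ℕ → ℝ) (p q : Upsilon) : ℝ :=
  if p.1.2 = q.1.2 then a p.1.2 * |p.1.1 - q.1.1|
  else a p.1.2 * p.1.1 + a q.1.2 * q.1.1

/-- Membership in `C = ∏_{i ≥ 1} [2^{-2i}, 2^{-2i+1}]`, together with the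
convention `a 0 = 1`. -/
def MemC (a : ℕ → ℝ) : Prop :=
  a 0 = 1 ∧ ∀ i : ℕ, 1 ≤ i →
    a i ∈ Set.Icc ((2 : ℝ) ^ (-(2 * (i : ℤ)))) ((2 : ℝ) ^ (-(2 * (i : ℤ)) + 1))

/-- A metric space is *geodesic* if any two points `x, y` are joined by a
geodesic, i.e. a map `γ : [0,1] → X` with `γ 0 = x`, `γ 1 = y` and
`dist (γ s) (γ t) = |s - t| * dist x y`. -/
def IsGeodesicSpace (X : Type*) [MetricSpace X] : Prop :=
  ∀ x y : X, ∃ γ : ℝ → X, γ 0 = x ∧ γ 1 = y ∧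
    ∀ s ∈ Set.Icc (0 : ℝ) 1, ∀ t ∈ Set.Icc (0 : ℝ) 1,
      dist (γ s) (γ t) = |s - t| * dist x y

/-- A metric space is *CAT(0)* if it is geodesic and every geodesic triangle
satisfies the Euclidean comparison inequality; equivalently (the formulation
used here), the comparison (CN) inequality holds along every geodesic. -/
def IsCAT0Space (X : Type*) [MetricSpace X] : Prop :=
  IsGeodesicSpace X ∧
  ∀ x y z : X, ∀ γ : ℝ → X, γ 0 = x → γ 1 = y →
    (∀ s ∈ Set.Icc (0 : ℝ) 1, ∀ t ∈ Set.Icc (0 : ℝ) 1,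
      dist (γ s) (γ t) = |s - t| * dist x y) →
    ∀ t ∈ Set.Icc (0 : ℝ) 1,
      dist z (γ t) ^ 2 ≤
        (1 - t) * dist z x ^ 2 + t * dist z y ^ 2 - t * (1 - t) * dist x y ^ 2

/-!
`R[a]` is the metric of a star of segments of lengths `a i` glued at the origin: the point
`(s, i)` sits at height `a i * s` on the `i`-th edge, and in heights the distance is `starDist`,
`|η - η'|` on one edge and `η + η'` across edges. This is a 0-hyperbolic metric (the four-point
condition is an inequality between reals, settled case by case). Geodesics run along one edge, or
down one edge and up another, and along a geodesic the four-point condition, squared, gives the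
CN inequality. Since `a i → 0`, any neighbourhood of the origin contains all but finitely many
edges, so `Υ` is the image of `ℕ × [0, 1]` under a continuous map tending to the origin at
infinity, hence compact.
-/

open Set Filter Topology

section StarDistance

variable {ι : Type*} [DecidableEq ι]

def starDist (i j : ι) (x y : ℝ) : ℝ := if i = j then |x - y| else x + y

theorem starDist_comm (i j : ι) (x y : ℝ) : starDist i j x y = starDist j i y x := by
  unfold starDist
  grind [abs_sub_comm]

theorem starDist_zero_left (i j : ι) {y : ℝ} (hy : 0 ≤ y) : starDist i j 0 y = y := by
  simp [starDist, abs_of_nonneg hy]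

theorem starDist_eq_zero {i j : ι} {x y : ℝ} (hx : 0 ≤ x) (hy : 0 ≤ y)
    (h : starDist i j x y = 0) : x = y ∧ (i = j ∨ x = 0) := by
  unfold starDist at h
  split_ifs at h with hij
  · exact ⟨sub_eq_zero.1 (abs_eq_zero.1 h), Or.inl hij⟩
  · exact ⟨by linarith, Or.inr (by linarith)⟩

theorem starDist_triangle {x y z : ℝ} (hx : 0 ≤ x) (hy : 0 ≤ y) (hz : 0 ≤ z) (i j k : ι) :
    starDist i j x y ≤ starDist i k x z + starDist k j z y := by
  simp only [starDist, abs_eq_max_neg]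
  grind

theorem starDist_four_point {x y z w : ℝ} (hx : 0 ≤ x) (hy : 0 ≤ y) (hz : 0 ≤ z)
    (hw : 0 ≤ w) (i j k l : ι) :
    starDist i j x y + starDist k l z w ≤
      max (starDist i k x z + starDist j l y w) (starDist i l x w + starDist j k y z) := by
  simp only [starDist, abs_eq_max_neg, le_max_iff]
  grind

end StarDistance

theorem comparison_sq_le_of_le_sub {m b₁ b₂ d t : ℝ} (hm : 0 ≤ m) (ht : 0 ≤ t)
    (hmb : m ≤ b₁ - t * d) (hb₁ : b₁ ≤ b₂ + d) (hd : d ≤ b₁ + b₂) :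
    m ^ 2 ≤ (1 - t) * b₁ ^ 2 + t * b₂ ^ 2 - t * (1 - t) * d ^ 2 := by
  nlinarith [mul_le_mul hmb hmb hm (hm.trans hmb),
    mul_nonneg ht (mul_nonneg (sub_nonneg.2 hb₁) (sub_nonneg.2 hd))]

/-- The four-point condition at `z, m, x, y` bounds `dist z m` by `dist z x - t * dist x y` or by
`dist z y - (1 - t) * dist x y`; squaring either bound gives the CN inequality. -/
theorem dist_sq_le_of_four_point {X : Type*} [PseudoMetricSpace X] {x y z m : X} {t : ℝ}
    (ht : t ∈ Icc (0 : ℝ) 1) (hxm : dist x m = t * dist x y)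
    (hmy : dist m y = (1 - t) * dist x y)
    (h4 : dist z m + dist x y ≤ max (dist z x + dist m y) (dist z y + dist m x)) :
    dist z m ^ 2 ≤
      (1 - t) * dist z x ^ 2 + t * dist z y ^ 2 - t * (1 - t) * dist x y ^ 2 := by
  have hzx := dist_triangle z y x
  have hzy := dist_triangle z x y
  have hxy := dist_triangle x z y
  rw [dist_comm m x, hxm, hmy] at h4
  rw [dist_comm y x] at hzx
  rw [dist_comm x z] at hxy
  rcases le_max_iff.1 h4 with h | h
  · exact comparison_sq_le_of_le_sub (dist_nonneg (x := z) (y := m)) ht.1 (by linarith) hzx hxy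
  · convert comparison_sq_le_of_le_sub (dist_nonneg (x := z) (y := m)) (sub_nonneg.2 ht.2)
      (by linarith) hzy (by linarith) using 1
    ring

theorem exists_geodesic_of_isometryOn {X : Type*} [PseudoMetricSpace X] {f : ℝ → X}
    {S : Set ℝ} (hS : Convex ℝ S) (hf : ∀ s ∈ S, ∀ t ∈ S, dist (f s) (f t) = |s - t|)
    {u v : ℝ} (hu : u ∈ S) (hv : v ∈ S) :
    ∃ γ : ℝ → X, γ 0 = f u ∧ γ 1 = f v ∧ ∀ s ∈ Icc (0 : ℝ) 1, ∀ t ∈ Icc (0 : ℝ) 1,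
      dist (γ s) (γ t) = |s - t| * dist (f u) (f v) := by
  refine ⟨fun r => f (u + r • (v - u)), by simp, by simp, fun s hs t ht => ?_⟩
  rw [hf _ (hS.add_smul_sub_mem hu hv hs) _ (hS.add_smul_sub_mem hu hv ht), hf u hu v hv,
    smul_eq_mul, smul_eq_mul, abs_sub_comm u v, ← abs_mul]
  ring_nf

namespace Upsilon

def origin : Upsilon := ⟨(0, 0), Or.inl rfl⟩

def edge (p : Upsilon) : ℕ := p.1.2

def height (a : ℕ → ℝ) (p : Upsilon) : ℝ := a p.edge * p.1.1

/-- The point at height `η` on the `i`-th edge; the origin unless `0 < η ≤ a i`. -/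
noncomputable def ofHeight (a : ℕ → ℝ) (i : ℕ) (η : ℝ) : Upsilon :=
  if h : 0 < η / a i ∧ η / a i ≤ 1 then ⟨(η / a i, i), Or.inr h⟩ else origin

variable {a : ℕ → ℝ}

theorem param_mem_Icc (p : Upsilon) : p.1.1 ∈ Icc (0 : ℝ) 1 := by
  rcases p.2 with h | h
  · simp [h]
  · exact ⟨h.1.le, h.2⟩

theorem height_mem_Icc (ha : ∀ i, 0 ≤ a i) (p : Upsilon) : height a p ∈ Icc 0 (a p.edge) :=
  ⟨mul_nonneg (ha _) (param_mem_Icc p).1, mul_le_of_le_one_right (ha _) (param_mem_Icc p).2⟩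

theorem height_origin : height a origin = 0 := by
  simp [height, origin]

theorem ofHeight_zero (i : ℕ) : ofHeight a i 0 = origin := by
  simp [ofHeight]

theorem ofHeight_val (hpos : ∀ i, 0 < a i) {i : ℕ} {η : ℝ} (h0 : 0 < η) (h1 : η ≤ a i) :
    (ofHeight a i η).1 = (η / a i, i) :=
  congrArg Subtype.val (dif_pos ⟨div_pos h0 (hpos i), (div_le_one (hpos i)).2 h1⟩ :
    ofHeight a i η = _)

theorem edge_ofHeight (hpos : ∀ i, 0 < a i) {i : ℕ} {η : ℝ} (h0 : 0 < η) (h1 : η ≤ a i) :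
    (ofHeight a i η).edge = i := by
  simp [edge, ofHeight_val hpos h0 h1]

theorem height_ofHeight (hpos : ∀ i, 0 < a i) {i : ℕ} {η : ℝ} (hη : η ∈ Icc 0 (a i)) :
    height a (ofHeight a i η) = η := by
  rcases hη.1.eq_or_lt with rfl | h0
  · rw [ofHeight_zero, height_origin]
  · simp only [height, edge, ofHeight_val hpos h0 hη.2]
    field_simp [(hpos i).ne']

theorem ofHeight_height (hpos : ∀ i, 0 < a i) (p : Upsilon) :
    ofHeight a p.edge (height a p) = p := by
  rcases p.2 with h | h
  · have hp : p = origin := Subtype.ext h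
    subst hp
    rw [height_origin, ofHeight_zero]
  · refine Subtype.ext ((ofHeight_val hpos (mul_pos (hpos _) h.1)
      (mul_le_of_le_one_right (hpos _).le h.2)).trans ?_)
    simp [edge, (hpos p.1.2).ne']

theorem Rmet_eq_starDist (ha : ∀ i, 0 ≤ a i) (p q : Upsilon) :
    Rmet a p q = starDist p.edge q.edge (height a p) (height a q) := by
  unfold Rmet starDist height edge
  split_ifs with h
  · rw [h, ← mul_sub, abs_mul, abs_of_nonneg (ha _)]
  · rfl

theorem Rmet_origin (ha : ∀ i, 0 ≤ a i) (p : Upsilon) : Rmet a p origin = height a p := by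
  rw [Rmet_eq_starDist ha, height_origin, starDist_comm,
    starDist_zero_left _ _ (height_mem_Icc ha p).1]

theorem Rmet_four_point (ha : ∀ i, 0 ≤ a i) (p q r w : Upsilon) :
    Rmet a p q + Rmet a r w ≤ max (Rmet a p r + Rmet a q w) (Rmet a p w + Rmet a q r) := by
  simp only [Rmet_eq_starDist ha]
  exact starDist_four_point (height_mem_Icc ha p).1 (height_mem_Icc ha q).1
    (height_mem_Icc ha r).1 (height_mem_Icc ha w).1 _ _ _ _

theorem Rmet_ofHeight (hpos : ∀ i, 0 < a i) {i j : ℕ} {η η' : ℝ} (hη : η ∈ Icc 0 (a i))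
    (hη' : η' ∈ Icc 0 (a j)) :
    Rmet a (ofHeight a i η) (ofHeight a j η') = starDist i j η η' := by
  rw [Rmet_eq_starDist (fun k => (hpos k).le), height_ofHeight hpos hη, height_ofHeight hpos hη']
  rcases hη.1.eq_or_lt with rfl | h0
  · rw [starDist_zero_left _ _ hη'.1, starDist_zero_left _ _ hη'.1]
  rcases hη'.1.eq_or_lt with rfl | h0'
  · rw [starDist_comm, starDist_zero_left _ _ hη.1, starDist_comm, starDist_zero_left _ _ hη.1]
  rw [edge_ofHeight hpos h0 hη.2, edge_ofHeight hpos h0' hη'.2]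

theorem eq_of_Rmet_eq_zero (hpos : ∀ i, 0 < a i) {p q : Upsilon} (h : Rmet a p q = 0) :
    p = q := by
  have ha : ∀ i, 0 ≤ a i := fun i => (hpos i).le
  rw [Rmet_eq_starDist ha] at h
  obtain ⟨hh, hpq | hp0⟩ :=
    starDist_eq_zero (height_mem_Icc ha p).1 (height_mem_Icc ha q).1 h
  · rw [← ofHeight_height hpos p, ← ofHeight_height hpos q, hh, hpq]
  · rw [← ofHeight_height hpos p, ← ofHeight_height hpos q, ← hh, hp0, ofHeight_zero,
      ofHeight_zero]

noncomputable abbrev metricSpace (a : ℕ → ℝ) (hpos : ∀ i, 0 < a i) :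
    MetricSpace Upsilon where
  dist := Rmet a
  dist_self p := by simp [Rmet]
  dist_comm p q := by
    rw [Rmet_eq_starDist (fun i => (hpos i).le), Rmet_eq_starDist (fun i => (hpos i).le),
      starDist_comm]
  dist_triangle p q r := by
    have ha : ∀ i, 0 ≤ a i := fun i => (hpos i).le
    simp only [Rmet_eq_starDist ha]
    exact starDist_triangle (height_mem_Icc ha p).1 (height_mem_Icc ha r).1
      (height_mem_Icc ha q).1 _ _ _
  eq_of_dist_eq_zero := eq_of_Rmet_eq_zero hpos

/-- The union of the `i`-th and `j`-th edges parametrised by signed height: `σ ≤ 0` is on the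
`i`-th edge, `σ > 0` on the `j`-th. -/
noncomputable def throughOrigin (a : ℕ → ℝ) (i j : ℕ) (σ : ℝ) : Upsilon :=
  if σ ≤ 0 then ofHeight a i (-σ) else ofHeight a j σ

theorem Rmet_throughOrigin (hpos : ∀ i, 0 < a i) {i j : ℕ} (hij : i ≠ j) {σ τ : ℝ}
    (hσ : σ ∈ Icc (-a i) (a j)) (hτ : τ ∈ Icc (-a i) (a j)) :
    Rmet a (throughOrigin a i j σ) (throughOrigin a i j τ) = |σ - τ| := by
  obtain ⟨hσ₁, hσ₂⟩ := hσ
  obtain ⟨hτ₁, hτ₂⟩ := hτ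
  unfold throughOrigin
  split_ifs <;>
    rw [Rmet_ofHeight hpos ⟨by linarith, by linarith⟩ ⟨by linarith, by linarith⟩] <;>
    simp only [starDist, abs_eq_max_neg] <;> grind

theorem isGeodesicSpace (hpos : ∀ i, 0 < a i) :
    @IsGeodesicSpace Upsilon (metricSpace a hpos) := by
  let := metricSpace a hpos
  have ha : ∀ i, 0 ≤ a i := fun i => (hpos i).le
  intro x y
  have hx := height_mem_Icc ha x
  have hy := height_mem_Icc ha y
  by_cases hxy : x.edge = y.edge
  · have hf : ∀ s ∈ Icc 0 (a x.edge), ∀ t ∈ Icc 0 (a x.edge),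
        dist (ofHeight a x.edge s) (ofHeight a x.edge t) = |s - t| := fun s hs t ht =>
      (Rmet_ofHeight hpos hs ht).trans (if_pos rfl)
    have := exists_geodesic_of_isometryOn (convex_Icc _ _) hf hx (hxy ▸ hy)
    rwa [ofHeight_height hpos, hxy, ofHeight_height hpos] at this
  · have hf : ∀ s ∈ Icc (-a x.edge) (a y.edge), ∀ t ∈ Icc (-a x.edge) (a y.edge),
        dist (throughOrigin a x.edge y.edge s) (throughOrigin a x.edge y.edge t) = |s - t| :=
      fun s hs t ht => Rmet_throughOrigin hpos hxy hs ht
    have hx' : throughOrigin a x.edge y.edge (-height a x) = x := by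
      rw [throughOrigin, if_pos (neg_nonpos.2 hx.1), neg_neg, ofHeight_height hpos]
    have hy' : throughOrigin a x.edge y.edge (height a y) = y := by
      rw [throughOrigin]
      split_ifs with h
      · have h0 : height a y = 0 := le_antisymm h hy.1
        rw [h0, neg_zero, ofHeight_zero, ← ofHeight_zero y.edge, ← h0, ofHeight_height hpos]
      · exact ofHeight_height hpos y
    have := exists_geodesic_of_isometryOn (convex_Icc _ _) hf
      (u := -height a x) ⟨neg_le_neg hx.2, by linarith [hx.1, hy.1, hy.2]⟩
      (v := height a y) ⟨by linarith [hx.1, hx.2, hy.1], hy.2⟩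
    rwa [hx', hy'] at this

theorem compactSpace (hpos : ∀ i, 0 < a i) (hlim : Tendsto a atTop (𝓝 0)) :
    letI := metricSpace a hpos; CompactSpace Upsilon := by
  let := metricSpace a hpos
  have ha : ∀ i, 0 ≤ a i := fun i => (hpos i).le
  have hmem (i : ℕ) (u : Icc (0 : ℝ) 1) : a i * u ∈ Icc 0 (a i) :=
    ⟨mul_nonneg (ha i) u.2.1, mul_le_of_le_one_right (ha i) u.2.2⟩
  let F : ℕ × Icc (0 : ℝ) 1 → Upsilon := fun p => ofHeight a p.1 (a p.1 * p.2)
  have hF : Continuous F := continuous_prod_of_discrete_left.2 fun i =>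
    (LipschitzWith.of_dist_le_mul (K := (a i).toNNReal) fun u v => by
      change Rmet a _ _ ≤ _
      rw [Rmet_ofHeight hpos (hmem i u) (hmem i v), Real.coe_toNNReal _ (ha i),
        Subtype.dist_eq, Real.dist_eq, starDist, if_pos rfl, ← mul_sub, abs_mul,
        abs_of_nonneg (ha i)]).continuous
  have hF_tendsto : Tendsto F (cocompact _) (𝓝 origin) := by
    refine Metric.tendsto_nhds.2 fun ε hε => ?_
    obtain ⟨N, hN⟩ := eventually_atTop.1 (hlim.eventually (gt_mem_nhds hε))
    refine mem_cocompact.2 ⟨Iio N ×ˢ univ, (finite_Iio N).isCompact.prod isCompact_univ,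
      fun p hp => ?_⟩
    have hNp : N ≤ p.1 := by simpa using hp
    change Rmet a _ _ < ε
    rw [Rmet_origin ha, height_ofHeight hpos (hmem _ _)]
    exact (mul_le_of_le_one_right (ha _) p.2.2.2).trans_lt (hN _ hNp)
  have hF_surj : range F = univ := eq_univ_of_forall fun p =>
    ⟨(p.edge, ⟨p.1.1, param_mem_Icc p⟩), ofHeight_height hpos p⟩
  exact ⟨by simpa [hF_surj] using hF_tendsto.isCompact_insert_range_of_cocompact hF⟩

theorem isCAT0Space (hpos : ∀ i, 0 < a i) : @IsCAT0Space Upsilon (metricSpace a hpos) := by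
  let := metricSpace a hpos
  refine ⟨isGeodesicSpace hpos, fun x y z γ hγ0 hγ1 hγ t ht => ?_⟩
  have hxm : dist x (γ t) = t * dist x y := by
    simpa [hγ0, abs_of_nonneg ht.1] using hγ 0 (left_mem_Icc.2 zero_le_one) t ht
  have hmy : dist (γ t) y = (1 - t) * dist x y := by
    simpa [hγ1, abs_of_nonpos (sub_nonpos.2 ht.2)] using hγ t ht 1 (right_mem_Icc.2 zero_le_one)
  exact dist_sq_le_of_four_point ht hxm hmy
    (Rmet_four_point (fun i => (hpos i).le) z (γ t) x y)

end Upsilon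

namespace MemC

variable {a : ℕ → ℝ}

theorem pos (ha : MemC a) (i : ℕ) : 0 < a i := by
  rcases Nat.eq_zero_or_pos i with rfl | hi
  · rw [ha.1]
    exact one_pos
  · exact (zpow_pos two_pos _).trans_le (ha.2 i hi).1

theorem tendsto_zero (ha : MemC a) : Tendsto a atTop (𝓝 0) := by
  have hbound (i : ℕ) (hi : 1 ≤ i) : a i ≤ 2 * (4⁻¹ : ℝ) ^ i := by
    refine (ha.2 i hi).2.trans_eq ?_
    rw [zpow_add_one₀ two_ne_zero, zpow_neg, zpow_mul, zpow_natCast, inv_pow, mul_comm]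
    norm_num
  have hlim : Tendsto (fun i : ℕ => 2 * (4⁻¹ : ℝ) ^ i) atTop (𝓝 0) := by
    simpa using (tendsto_pow_atTop_nhds_zero_of_lt_one (by norm_num : (0 : ℝ) ≤ 4⁻¹)
      (by norm_num)).const_mul 2
  exact tendsto_of_tendsto_of_tendsto_of_le_of_le' tendsto_const_nhds hlim
    (Eventually.of_forall fun i => (ha.pos i).le) ((eventually_ge_atTop 1).mono hbound)

end MemC

/-- For every `a ∈ C` (with `a 0 = 1`), `R[a]` is a metric
on `Υ`, and the resulting metric space `(Υ, R[a])` is compact, geodesic, and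
CAT(0). -/
theorem statement11 (a : ℕ → ℝ) (ha : MemC a) :
    ∃ M : MetricSpace Upsilon,
      (∀ p q : Upsilon, @dist Upsilon M.toPseudoMetricSpace.toDist p q = Rmet a p q) ∧
      @CompactSpace Upsilon
        M.toPseudoMetricSpace.toUniformSpace.toTopologicalSpace ∧
      @IsGeodesicSpace Upsilon M ∧
      @IsCAT0Space Upsilon M :=
  ⟨Upsilon.metricSpace a ha.pos, fun _ _ => rfl, Upsilon.compactSpace ha.pos ha.tendsto_zero,
    Upsilon.isGeodesicSpace ha.pos, Upsilon.isCAT0Space ha.pos⟩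
end

section
/- Let X and Y be Hausdorff topological spaces with no isolated points. Then every subset of the product space X × Y that is homeomorphic to ℝ (a topological arc) has empty interior in X × Y. -/
/-!
Suppose a point `g t` of an arc `g : ℝ → X × Y` is interior. Near `t` the arc is an open map,
so a small interval `J ∋ t` has open connected image `W`, contained in a box `U ×ˢ V` that lies
in the image of a larger interval `I`. The projections of `W` are open and connected, hence (no
isolated points) nontrivial, and a product of two such sets stays connected after removing one
point. But removing `g t` from the image of `I` splits it into the two disjoint open images of
the halves of `I`, and the punctured product meets both of them.
-/

open Set Topology Function

lemma singleton_prod_union_prod_singleton_subset_prod_diff {α β : Type*} {P : Set α} {Q : Set β}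
    {a x : α} {b y : β} (ha : a ∈ P) (hb : b ∈ Q) (hax : a ≠ x) (hby : b ≠ y) :
    {a} ×ˢ Q ∪ P ×ˢ {b} ⊆ (P ×ˢ Q) \ {(x, y)} := by
  rintro ⟨c, d⟩ (⟨rfl, hd⟩ | ⟨hc, rfl⟩) <;> simp_all

section ProdDiffSingleton

variable {α β : Type*} [TopologicalSpace α] [TopologicalSpace β]

lemma IsPreconnected.singleton_prod_union_prod_singleton {P : Set α} {Q : Set β}
    (hP : IsPreconnected P) (hQ : IsPreconnected Q) {a : α} {b : β} (ha : a ∈ P)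
    (hb : b ∈ Q) : IsPreconnected ({a} ×ˢ Q ∪ P ×ˢ {b}) :=
  (isPreconnected_singleton.prod hQ).union (a, b) ⟨rfl, hb⟩ ⟨ha, rfl⟩
    (hP.prod isPreconnected_singleton)

theorem IsPreconnected.prod_diff_singleton {P : Set α} {Q : Set β}
    (hP : IsPreconnected P) (hQ : IsPreconnected Q) (hP' : P.Nontrivial) (hQ' : Q.Nontrivial)
    (p : α × β) : IsPreconnected ((P ×ˢ Q) \ {p}) := by
  obtain ⟨x, y⟩ := p
  obtain ⟨x', hx'P, hx'x⟩ := hP'.exists_ne x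
  obtain ⟨y', hy'Q, hy'y⟩ := hQ'.exists_ne y
  -- each point is joined to `(x', y')` by a cross `{a} ×ˢ Q ∪ P ×ˢ {b}` avoiding `(x, y)`
  refine isPreconnected_of_forall (x', y') ?_
  rintro ⟨a, b⟩ ⟨⟨ha, hb⟩, hab⟩
  by_cases hby : b = y
  · have hax : a ≠ x := by rintro rfl; exact hab (by rw [hby]; rfl)
    exact ⟨_, singleton_prod_union_prod_singleton_subset_prod_diff ha hy'Q hax hy'y,
      Or.inr ⟨hx'P, rfl⟩, Or.inl ⟨rfl, hb⟩,
      hP.singleton_prod_union_prod_singleton hQ ha hy'Q⟩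
  · exact ⟨_, singleton_prod_union_prod_singleton_subset_prod_diff hx'P hb hx'x hby,
      Or.inl ⟨rfl, hy'Q⟩, Or.inr ⟨ha, rfl⟩,
      hP.singleton_prod_union_prod_singleton hQ hx'P hb⟩

lemma IsOpen.nontrivial_of_forall_not_isOpen_singleton (h : ∀ x : α, ¬IsOpen ({x} : Set α))
    {P : Set α} (hP : IsOpen P) (hne : P.Nonempty) : P.Nontrivial := by
  obtain ⟨x, hx⟩ := hne
  by_contra hP'
  exact h x ((not_nontrivial_iff.mp hP').eq_singleton_of_mem hx ▸ hP)

theorem IsPreconnected.fst_image_prod_snd_image_diff_singleton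
    (hα : ∀ x : α, ¬IsOpen ({x} : Set α)) (hβ : ∀ y : β, ¬IsOpen ({y} : Set β))
    {W : Set (α × β)} (hW : IsOpen W) (hWc : IsPreconnected W) {p : α × β} (hp : p ∈ W) :
    IsPreconnected (((Prod.fst '' W) ×ˢ (Prod.snd '' W)) \ {p}) :=
  (hWc.image _ continuous_fst.continuousOn).prod_diff_singleton
    (hWc.image _ continuous_snd.continuousOn)
    ((isOpenMap_fst _ hW).nontrivial_of_forall_not_isOpen_singleton hα
      ⟨_, mem_image_of_mem _ hp⟩)
    ((isOpenMap_snd _ hW).nontrivial_of_forall_not_isOpen_singleton hβ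
      ⟨_, mem_image_of_mem _ hp⟩)
    p

end ProdDiffSingleton

lemma Topology.IsInducing.isOpen_image_of_image_subset_interior {α β : Type*}
    [TopologicalSpace α] [TopologicalSpace β] {f : α → β} (hf : IsInducing f) {O : Set α}
    (hO : IsOpen O) (hOf : f '' O ⊆ interior (range f)) : IsOpen (f '' O) := by
  obtain ⟨G, hG, rfl⟩ := hf.isOpen_iff.mp hO
  rw [image_preimage_eq_inter_range] at hOf ⊢
  have hGf : G ∩ range f = G ∩ interior (range f) :=
    subset_antisymm (subset_inter inter_subset_left hOf)
      (inter_subset_inter_right _ interior_subset)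
  exact hGf ▸ hG.inter isOpen_interior

lemma IsPreconnected.subset_image_Ioo_or_subset_image_Ioo {α Z : Type*} [LinearOrder α]
    [TopologicalSpace Z] {g : α → Z} (hg : Injective g) {a t b : α}
    (hl : IsOpen (g '' Ioo a t)) (hr : IsOpen (g '' Ioo t b)) {C : Set Z} (hC : IsPreconnected C)
    (hCsub : C ⊆ g '' Ioo a b \ {g t}) : C ⊆ g '' Ioo a t ∨ C ⊆ g '' Ioo t b := by
  refine hC.subset_or_subset hl hr ?_ ?_
  · exact (disjoint_image_iff hg).mpr
      (disjoint_left.mpr fun s hs hs' => lt_asymm hs.2 hs'.1)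
  · rintro _ hz
    obtain ⟨⟨s, ⟨has, hsb⟩, rfl⟩, hst⟩ := hCsub hz
    rcases lt_trichotomy s t with h | rfl | h
    · exact Or.inl (mem_image_of_mem g ⟨has, h⟩)
    · exact absurd rfl hst
    · exact Or.inr (mem_image_of_mem g ⟨h, hsb⟩)

theorem Topology.IsEmbedding.interior_range_eq_empty {X Y : Type*} [TopologicalSpace X]
    [TopologicalSpace Y] (hX : ∀ x : X, ¬IsOpen ({x} : Set X))
    (hY : ∀ y : Y, ¬IsOpen ({y} : Set Y)) {g : ℝ → X × Y} (hg : IsEmbedding g) :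
    interior (range g) = ∅ := by
  refine eq_empty_iff_forall_notMem.mpr fun p hp => ?_
  obtain ⟨t, rfl⟩ := interior_subset hp
  have hopen : ∀ O, IsOpen O → O ⊆ g ⁻¹' interior (range g) → IsOpen (g '' O) :=
    fun O hO hOs =>
      hg.isInducing.isOpen_image_of_image_subset_interior hO (image_subset_iff.mpr hOs)
  obtain ⟨a, b, ⟨hat, htb⟩, hI⟩ := mem_nhds_iff_exists_Ioo_subset.mp
    ((isOpen_interior.preimage hg.continuous).mem_nhds hp)
  obtain ⟨U, hU, V, hV, hUV⟩ := mem_nhds_prod_iff.mp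
    ((hopen _ isOpen_Ioo hI).mem_nhds (mem_image_of_mem g ⟨hat, htb⟩))
  obtain ⟨c, d, ⟨hct, htd⟩, hJ⟩ := mem_nhds_iff_exists_Ioo_subset.mp
    (Filter.inter_mem (hg.continuous.continuousAt.preimage_mem_nhds (prod_mem_nhds hU hV))
      (Ioo_mem_nhds hat htb))
  set W := g '' Ioo c d
  set C := ((Prod.fst '' W) ×ˢ (Prod.snd '' W)) \ {g t}
  have hWbox : W ⊆ U ×ˢ V := image_subset_iff.mpr fun s hs => (hJ hs).1
  have hC : IsPreconnected C :=
    IsPreconnected.fst_image_prod_snd_image_diff_singleton hX hY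
      (hopen _ isOpen_Ioo fun s hs => hI (hJ hs).2)
      (isPreconnected_Ioo.image _ hg.continuous.continuousOn) (mem_image_of_mem g ⟨hct, htd⟩)
  have hCsub : C ⊆ g '' Ioo a b \ {g t} :=
    sdiff_subset_sdiff_left <| (prod_mono ((image_mono hWbox).trans (fst_image_prod_subset U V))
      ((image_mono hWbox).trans (snd_image_prod_subset U V))).trans hUV
  have hmemC : ∀ s ∈ Ioo c d, s ≠ t → g s ∈ C := fun s hs hst =>
    ⟨subset_fst_image_prod_snd_image (mem_image_of_mem g hs), hg.injective.ne hst⟩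
  obtain ⟨l, hcl, hlt⟩ := exists_between hct
  obtain ⟨r, htr, hrd⟩ := exists_between htd
  rcases hC.subset_image_Ioo_or_subset_image_Ioo hg.injective
      (hopen _ isOpen_Ioo fun s hs => hI ⟨hs.1, hs.2.trans htb⟩)
      (hopen _ isOpen_Ioo fun s hs => hI ⟨hat.trans hs.1, hs.2⟩) hCsub with h | h
  · have hr := hg.injective.mem_set_image.mp (h (hmemC r ⟨hct.trans htr, hrd⟩ htr.ne'))
    exact hr.2.not_gt htr
  · have hl := hg.injective.mem_set_image.mp (h (hmemC l ⟨hcl, hlt.trans htd⟩ hlt.ne))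
    exact hl.1.not_gt hlt

theorem statement16_general {X Y : Type*} [TopologicalSpace X] [TopologicalSpace Y]
    (hX : ∀ x : X, ¬ IsOpen ({x} : Set X))
    (hY : ∀ y : Y, ¬ IsOpen ({y} : Set Y))
    (A : Set (X × Y)) (hA : Nonempty (↥A ≃ₜ ℝ)) :
    interior A = ∅ := by
  obtain ⟨f⟩ := hA
  have hrange : range ((↑) ∘ f.symm : ℝ → X × Y) = A := by
    rw [f.symm.surjective.range_comp, Subtype.range_coe]
  rw [← hrange]
  exact (IsEmbedding.subtypeVal.comp f.symm.isEmbedding).interior_range_eq_empty hX hY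

/-- Let `X` and `Y` be Hausdorff topological spaces with no
isolated points.  Then every subset of `X × Y` homeomorphic to `ℝ` (a
topological arc) has empty interior in `X × Y`. -/
theorem statement16 {X Y : Type*} [TopologicalSpace X] [TopologicalSpace Y]
    [T2Space X] [T2Space Y]
    (hX : ∀ x : X, ¬ IsOpen ({x} : Set X))
    (hY : ∀ y : Y, ¬ IsOpen ({y} : Set Y))
    (A : Set (X × Y)) (hA : Nonempty (↥A ≃ₜ ℝ)) :
    interior A = ∅ :=
  statement16_general hX hY A hA
end
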